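/- arXiv:2002.05945 — 3 statements merged into one kernel-verified Lean document; each statement's English description precedes it below -/
import Mathlib

section
/- (Lemma 1, state-space growth is limited to the frontier) Let N be a WF-net and let σ^{i−1} = ⟨a_1,…,a_{i−1}⟩, σ^i = σ^{i−1}·⟨a_i⟩ and σ^{i+1} = σ^i·⟨a_{i+1}⟩, with corresponding SPNs N^S_{i−1}, N^S_i and N^S_{i+1}. Then for every marking M ∈ B(P^S_{i−1}) and every transition t ∈ T^S_{i+1}: if t is enabled in M in N^S_{i+1}, i.e. (N^S_{i+1}, M)[t⟩, then t ∈ T^S_i. In other words, markings over the old places P^S_{i−1} enable no transition that was newly added when extending the trace from σ^i to σ^{i+1}. -/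
open scoped ENNReal NNReal

/-- A transition ("move") of a synchronous product net (SPN): a log move `(t'_j, ≫)`,
a model move `(≫, t)`, or a synchronous move `(t'_j, t)`. -/
inductive Move (T : Type) where
  | log   (j : ℕ)
  | model (t : T)
  | sync  (j : ℕ) (t : T)
  deriving DecidableEq

/-- A WF-net: a Petri net with labelled transitions (`none` represents the silent
label `τ`), a unique source place and a unique sink place.  `pre t` is the preset
`•t` and `post t` is the postset `t•` of a transition `t`. -/
structure WFNet (P T A : Type) where
  pre    : T → Set P
  post   : T → Set P
  label  : T → Option A
  source : P
  sink   : P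
  source_ne_sink : source ≠ sink
  no_arc_into_source : ∀ t, source ∉ post t
  no_arc_out_of_sink : ∀ t, sink ∉ pre t

/-- A marking of the SPN: a multiset over the SPN places, where `Sum.inl j` is the
trace-net place `p'_j` and `Sum.inr p` is a process-model place. -/
abbrev Marking (P : Type) := (ℕ ⊕ P) → ℕ

namespace SPN

variable {P T A : Type}

/-- The places `P^S = P^σ ∪ P` of the SPN of a trace `σ`: the trace-net places
`p'_0, …, p'_{|σ|}` together with all process-model places. -/
def places (P : Type) {A : Type} (σ : List A) : Set (ℕ ⊕ P) :=
  fun q => match q with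
  | Sum.inl j => j ≤ σ.length
  | Sum.inr _ => True

/-- The transitions `T^S` of the SPN of trace `σ` and WF-net `N`: log moves
`(t'_j, ≫)` for `1 ≤ j ≤ |σ|`, model moves `(≫, t)` for all model transitions `t`,
and synchronous moves `(t'_j, t)` whenever `λ(t) = σ(j) ≠ τ`. -/
def transitions (σ : List A) (N : WFNet P T A) : Set (Move T) :=
  fun m => match m with
  | Move.log j => 1 ≤ j ∧ j ≤ σ.length
  | Move.model _ => True
  | Move.sync j t => 1 ≤ j ∧ ∃ a, σ[j - 1]? = some a ∧ N.label t = some a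

/-- Preset `•m` of an SPN transition `m`. -/
def pre (N : WFNet P T A) : Move T → Set (ℕ ⊕ P)
  | Move.log j => {Sum.inl (j - 1)}
  | Move.model t => Sum.inr '' N.pre t
  | Move.sync j t => {Sum.inl (j - 1)} ∪ Sum.inr '' N.pre t

/-- Postset `m•` of an SPN transition `m`. -/
def post (N : WFNet P T A) : Move T → Set (ℕ ⊕ P)
  | Move.log j => {Sum.inl j}
  | Move.model t => Sum.inr '' N.post t
  | Move.sync j t => {Sum.inl j} ∪ Sum.inr '' N.post t

/-- The flow relation `F^S` of the SPN: arcs from places to transitions and from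
transitions to places. -/
def flow (σ : List A) (N : WFNet P T A) :
    Set (((ℕ ⊕ P) × Move T) ⊕ (Move T × (ℕ ⊕ P))) :=
  fun f => match f with
  | Sum.inl (q, m) => m ∈ transitions σ N ∧ q ∈ pre N m
  | Sum.inr (m, q) => m ∈ transitions σ N ∧ q ∈ post N m

open Classical in
/-- The initial marking `M_i^S = [p'_0, p_i]` of the SPN. -/
noncomputable def init (σ : List A) (N : WFNet P T A) : Marking P :=
  fun q => if q = Sum.inl 0 ∨ q = Sum.inr N.source then 1 else 0

open Classical in
/-- The final marking `M_f^S = [p'_{|σ|}, p_o]` of the SPN. -/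
noncomputable def final (σ : List A) (N : WFNet P T A) : Marking P :=
  fun q => if q = Sum.inl σ.length ∨ q = Sum.inr N.sink then 1 else 0

/-- `m` is enabled in marking `M`, `(N^S, M)[m⟩`, w.r.t. the transition set `S`. -/
def Enabled (N : WFNet P T A) (S : Set (Move T)) (M : Marking P) (m : Move T) : Prop :=
  m ∈ S ∧ ∀ q ∈ pre N m, 0 < M q

open Classical in
/-- The marking obtained by firing transition `m` in marking `M`. -/
noncomputable def fire (N : WFNet P T A) (m : Move T) (M : Marking P) : Marking P :=
  fun q =>
    if q ∈ pre N m ∧ q ∉ post N m then M q - 1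
    else if q ∈ post N m ∧ q ∉ pre N m then M q + 1
    else M q

/-- `FiresTo N S M ts M'`: firing the sequence `ts` of transitions from marking `M`
yields marking `M'` (each fired transition being enabled). -/
def FiresTo (N : WFNet P T A) (S : Set (Move T)) :
    Marking P → List (Move T) → Marking P → Prop
  | M, [], M' => M = M'
  | M, m :: ms, M' => Enabled N S M m ∧ FiresTo N S (fire N m M) ms M'

/-- `M` is reachable from `M₀`. -/
def Reachable (N : WFNet P T A) (S : Set (Move T)) (M₀ M : Marking P) : Prop :=
  ∃ ts, FiresTo N S M₀ ts M

/-- `M ∈ B(P^S)` for the SPN of `σ`: the marking only uses places of the SPN of `σ`. -/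
def SupportedOn (σ : List A) (M : Marking P) : Prop :=
  ∀ q, 0 < M q → q ∈ places P σ

/-- The standard cost function: synchronous moves and invisible model moves cost `0`,
log moves and visible model moves cost `1`. -/
def stdCost (N : WFNet P T A) : Move T → ℝ≥0
  | Move.log _ => 1
  | Move.model t => match N.label t with | none => 0 | some _ => 1
  | Move.sync _ _ => 0

/-- Total cost of a firing sequence. -/
noncomputable def seqCost (c : Move T → ℝ≥0) (ts : List (Move T)) : ℝ≥0∞ :=
  (ts.map fun m => (c m : ℝ≥0∞)).sum

/-- Feasible solutions of the ILP defining the prefix-alignment heuristic at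
marking `M`: for every trace-net place the marking equation must reach the final
marking exactly, for every process-model place non-negativity suffices. -/
def Feasible (σ : List A) (N : WFNet P T A) (M : Marking P) (x : Move T → ℕ) : Prop :=
  (∀ j ≤ σ.length,
      (M (Sum.inl j) : ℤ)
        + ∑ᶠ m ∈ {m | m ∈ transitions σ N ∧ Sum.inl j ∈ post N m}, (x m : ℤ)
        - ∑ᶠ m ∈ {m | m ∈ transitions σ N ∧ Sum.inl j ∈ pre N m}, (x m : ℤ)
      = (final σ N (Sum.inl j) : ℤ))
  ∧ ∀ p : P,
      (0 : ℤ) ≤ (M (Sum.inr p) : ℤ)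
        + ∑ᶠ m ∈ {m | m ∈ transitions σ N ∧ Sum.inr p ∈ post N m}, (x m : ℤ)
        - ∑ᶠ m ∈ {m | m ∈ transitions σ N ∧ Sum.inr p ∈ pre N m}, (x m : ℤ)

/-- The prefix-alignment heuristic `h(M)`: the optimal value of the ILP
(`∞` if no feasible solution exists). -/
noncomputable def heuristic (σ : List A) (N : WFNet P T A) (c : Move T → ℝ≥0)
    (M : Marking P) : ℝ≥0∞ :=
  ⨅ (x : Move T → ℕ) (_ : Feasible σ N M x),
    ∑ᶠ m ∈ transitions σ N, (x m : ℝ≥0∞) * (c m : ℝ≥0∞)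

/-- Minimal cost of a firing sequence from `M₀` to `M` (`∞` if `M` is unreachable). -/
noncomputable def costToReach (N : WFNet P T A) (S : Set (Move T)) (d : Move T → ℝ≥0)
    (M₀ M : Marking P) : ℝ≥0∞ :=
  ⨅ (ts : List (Move T)) (_ : FiresTo N S M₀ ts M), seqCost d ts

/-- Minimal cost of a firing sequence from `M` to a goal marking, i.e. a marking
with a token in the trace-net place `p'_n`. -/
noncomputable def costToGoal (N : WFNet P T A) (S : Set (Move T)) (d : Move T → ℝ≥0)
    (n : ℕ) (M : Marking P) : ℝ≥0∞ :=
  ⨅ (ts : List (Move T)) (_ : ∃ M', FiresTo N S M ts M' ∧ 1 ≤ M' (Sum.inl n)), seqCost d ts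

end SPN

/-- **Lemma 1 (state-space growth is limited to the frontier).**
For a WF-net `N` and traces `σ^{i-1}`, `σ^i = σ^{i-1}·⟨aᵢ⟩`, `σ^{i+1} = σ^i·⟨aᵢ₊₁⟩`
with SPNs `N^S_{i-1}`, `N^S_i`, `N^S_{i+1}`: every marking `M ∈ B(P^S_{i-1})` that
enables a transition `t ∈ T^S_{i+1}` in `N^S_{i+1}` only enables transitions that
were already present in `T^S_i`. -/
theorem statespace_growth_limited_to_frontier
    {P T A : Type} (N : WFNet P T A) (σ : List A) (ai anext : A)
    (M : Marking P) (hM : SPN.SupportedOn σ M)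
    (m : Move T)
    (hen : SPN.Enabled N (SPN.transitions (σ ++ [ai] ++ [anext]) N) M m) :
    m ∈ SPN.transitions (σ ++ [ai]) N := by
  obtain ⟨hmem, hpre⟩ := hen
  cases m with
  | log j =>
    obtain ⟨h1, _⟩ := hmem
    have htok : 0 < M (Sum.inl (j - 1)) := hpre _ (by simp [SPN.pre])
    have hle : j - 1 ≤ σ.length := hM _ htok
    exact ⟨h1, by simp; omega⟩
  | model t => trivial
  | sync j t =>
    obtain ⟨h1, a, ha, hl⟩ := hmem
    have htok : 0 < M (Sum.inl (j - 1)) := hpre _ (by simp [SPN.pre])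
    have hle : j - 1 ≤ σ.length := hM _ htok
    refine ⟨h1, a, ?_, hl⟩
    rw [List.getElem?_eq_some_iff] at ha ⊢
    obtain ⟨hlt, hval⟩ := ha
    have hlt' : j - 1 < (σ ++ [ai]).length := by simp; omega
    refine ⟨hlt', ?_⟩
    rw [← hval, List.getElem_append_left hlt']
end

section
/- (Lemma 2, new states do not connect to old states) Let N be a WF-net and let σ^i = ⟨a_1,…,a_i⟩ and σ^{i+1} = σ^i·⟨a_{i+1}⟩, with corresponding SPNs N^S_i and N^S_{i+1}. Then for every marking M ∈ B(P^S_{i+1}) ∖ B(P^S_i) (i.e., every marking of N^S_{i+1} that places at least one token on the newly added place p'_{i+1}) and every marking M' ∈ B(P^S_i), there is no transition t ∈ T^S_{i+1} with (N^S_{i+1}, M)[t⟩(N^S_{i+1}, M'). -/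
open scoped ENNReal NNReal

/-- **Lemma 2 (new states do not connect to old states).**
For a WF-net `N`, trace `σ^i` and extension `σ^{i+1} = σ^i·⟨aᵢ₊₁⟩` with SPNs
`N^S_i` and `N^S_{i+1}`: for every marking `M ∈ B(P^S_{i+1}) ∖ B(P^S_i)` (i.e. a
marking of `N^S_{i+1}` with at least one token on the new trace-net place
`p'_{i+1}`) and every marking `M' ∈ B(P^S_i)`, no transition of `N^S_{i+1}` fires
from `M` to `M'`. -/
theorem new_states_do_not_connect_to_old_states
    {P T A : Type} (N : WFNet P T A) (σ : List A) (a : A)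
    (M M' : Marking P)
    (hM : SPN.SupportedOn (σ ++ [a]) M)
    (hMnew : 0 < M (Sum.inl (σ.length + 1)))
    (hM' : SPN.SupportedOn σ M') :
    ¬ ∃ m ∈ SPN.transitions (σ ++ [a]) N,
        SPN.Enabled N (SPN.transitions (σ ++ [a]) N) M m ∧ SPN.fire N m M = M' := by
  rintro ⟨m, hmT, ⟨_, _⟩, hfire⟩
  set n := σ.length
  -- the new place is not in the preset of any transition of the extended SPN
  have hnotpre : Sum.inl (n + 1) ∉ SPN.pre N m := by
    cases m with
    | log j =>
        obtain ⟨h1, h2⟩ := hmT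
        simp only [SPN.pre, Set.mem_singleton_iff, Sum.inl.injEq]
        simp only [List.length_append, List.length_singleton] at h2
        omega
    | model t => simp [SPN.pre]
    | sync j t =>
        obtain ⟨h1, a', ha', _⟩ := hmT
        have hj : j - 1 < n + 1 := by
          have := (List.getElem?_eq_some_iff.mp ha').1
          simpa [List.length_append] using this
        simp only [SPN.pre, Set.mem_union, Set.mem_singleton_iff, Set.mem_image,
          Sum.inl.injEq]
        rintro (h | ⟨p, _, h⟩)
        · omega
        · exact absurd h (by simp)
  -- hence firing keeps the token on the new place
  have hpos : 0 < SPN.fire N m M (Sum.inl (n + 1)) := by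
    unfold SPN.fire
    split
    · rename_i h; exact absurd h.1 hnotpre
    · split <;> omega
  rw [hfire] at hpos
  have hmem : n + 1 ≤ n := hM' _ hpos
  omega
end

section
/- (Feasibility of firing-count vectors for the heuristic ILP) Let N^S be the SPN of a trace σ of length n and a WF-net N, let c : T^S → ℝ_{≥0} be a cost function, and let M ∈ R(N^S, M_i^S) be a reachable marking. Suppose σ_t ∈ (T^S)* is a firing sequence with (N^S, M) →^{σ_t} (N^S, M') where M' is a goal marking, i.e., M'(p'_n) ≥ 1. Then the firing-count (Parikh) vector x given by x_t = (number of occurrences of t in σ_t) is a feasible solution of the integer linear program defining the prefix-alignment heuristic h(M): it satisfies M(p) + Σ_{t∈•p} x_t − Σ_{t∈p•} x_t = M_f^S(p) for every trace-net place p ∈ P^σ and M(p) + Σ_{t∈•p} x_t − Σ_{t∈p•} x_t ≥ 0 for every process-model place p ∈ P. -/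
open scoped ENNReal NNReal

namespace SPN

variable {P T A : Type}

/-! ### Auxiliary lemmas -/

variable [DecidableEq T]

open Classical

lemma firesTo_mem {N : WFNet P T A} {S : Set (Move T)} {M M' : Marking P}
    {ts : List (Move T)} (h : FiresTo N S M ts M') : ∀ m ∈ ts, m ∈ S := by
  induction ts generalizing M with
  | nil => simp
  | cons m ms ih =>
    rcases h with ⟨⟨hmem, _⟩, h2⟩
    intro m' hm'
    rcases List.mem_cons.1 hm' with rfl | h'
    · exact hmem
    · exact ih h2 m' h'

/-- Net token change of transition `m` at place `q`. -/
noncomputable def delta (N : WFNet P T A) (q : ℕ ⊕ P) (m : Move T) : ℤ :=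
  (if q ∈ post N m then 1 else 0) - (if q ∈ pre N m then 1 else 0)

lemma fire_cast {N : WFNet P T A} {m : Move T} {M : Marking P}
    (hen : ∀ q ∈ pre N m, 0 < M q) (q : ℕ ⊕ P) :
    (fire N m M q : ℤ) = (M q : ℤ) + delta N q m := by
  classical
  unfold fire delta
  by_cases h1 : q ∈ pre N m <;> by_cases h2 : q ∈ post N m <;> simp [h1, h2]
  have := hen q h1
  omega

lemma firesTo_state {N : WFNet P T A} {S : Set (Move T)} {M M' : Marking P}
    {ts : List (Move T)} (h : FiresTo N S M ts M') (q : ℕ ⊕ P) :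
    (M' q : ℤ) = (M q : ℤ) + (ts.map (delta N q)).sum := by
  induction ts generalizing M with
  | nil => rw [h]; simp
  | cons m ms ih =>
    rcases h with ⟨⟨_, hen⟩, h2⟩
    rw [ih h2, fire_cast hen]
    simp; ring

lemma finsum_count_eq {σ : List A} {N : WFNet P T A} (ts : List (Move T))
    (hts : ∀ m ∈ ts, m ∈ transitions σ N) (Q : Move T → Prop) :
    ∑ᶠ m ∈ {m | m ∈ transitions σ N ∧ Q m}, (ts.count m : ℤ)
      = ∑ m ∈ ts.toFinset, (if Q m then (ts.count m : ℤ) else 0) := by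
  classical
  rw [finsum_mem_def, finsum_eq_finset_sum_of_support_subset]
  · refine Finset.sum_congr rfl fun m hm => ?_
    rw [Set.indicator_apply]
    by_cases hQ : Q m
    · simp [hQ, hts m (List.mem_toFinset.1 hm)]
    · simp [hQ]
  · intro m hm
    simp only [Function.mem_support, Set.indicator_apply] at hm
    by_contra hmem
    have : ts.count m = 0 := List.count_eq_zero.2 fun h => hmem (List.mem_toFinset.2 h)
    simp [this] at hm

lemma finsum_diff_eq {σ : List A} {N : WFNet P T A} (ts : List (Move T))
    (hts : ∀ m ∈ ts, m ∈ transitions σ N) (q : ℕ ⊕ P) :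
    (∑ᶠ m ∈ {m | m ∈ transitions σ N ∧ q ∈ post N m}, (ts.count m : ℤ))
      - ∑ᶠ m ∈ {m | m ∈ transitions σ N ∧ q ∈ pre N m}, (ts.count m : ℤ)
      = (ts.map (delta N q)).sum := by
  classical
  rw [finsum_count_eq ts hts, finsum_count_eq ts hts,
    Finset.sum_list_map_count]
  rw [← Finset.sum_sub_distrib]
  refine Finset.sum_congr rfl fun m hm => ?_
  unfold delta
  by_cases h1 : q ∈ post N m <;> by_cases h2 : q ∈ pre N m <;>
    simp [h1, h2, mul_comm]

lemma inl_pre_lt {σ : List A} {N : WFNet P T A} {m : Move T}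
    (hm : m ∈ transitions σ N) {j : ℕ} (hj : Sum.inl j ∈ pre N m) : j < σ.length := by
  cases m with
  | log k =>
    obtain ⟨hk1, hk2⟩ := hm
    simp [pre] at hj
    omega
  | model t => simp [pre] at hj
  | sync k t =>
    obtain ⟨hk1, a, ha, -⟩ := hm
    have : k - 1 < σ.length := (List.getElem?_eq_some_iff.1 ha).1
    simp [pre] at hj
    omega

lemma inl_post_le {σ : List A} {N : WFNet P T A} {m : Move T}
    (hm : m ∈ transitions σ N) {j : ℕ} (hj : Sum.inl j ∈ post N m) : j ≤ σ.length := by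
  cases m with
  | log k =>
    obtain ⟨hk1, hk2⟩ := hm
    simp [post] at hj
    omega
  | model t => simp [post] at hj
  | sync k t =>
    obtain ⟨hk1, a, ha, -⟩ := hm
    have : k - 1 < σ.length := (List.getElem?_eq_some_iff.1 ha).1
    simp [post] at hj
    omega

lemma delta_sum_zero {σ : List A} {N : WFNet P T A} {m : Move T}
    (hm : m ∈ transitions σ N) :
    ∑ j ∈ Finset.range (σ.length + 1), delta N (Sum.inl j) m = 0 := by
  classical
  cases m with
  | log k =>
    obtain ⟨hk1, hk2⟩ := hm
    unfold delta pre post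
    simp only [Set.mem_singleton_iff, Sum.inl.injEq]
    rw [Finset.sum_sub_distrib]
    rw [Finset.sum_ite_eq' (Finset.range (σ.length + 1)) k fun _ => (1:ℤ),
      Finset.sum_ite_eq' (Finset.range (σ.length + 1)) (k-1) fun _ => (1:ℤ)]
    simp only [Finset.mem_range]
    rw [if_pos (by omega), if_pos (by omega)]
    ring
  | model t =>
    unfold delta pre post
    simp
  | sync k t =>
    obtain ⟨hk1, a, ha, -⟩ := hm
    have hlt : k - 1 < σ.length := (List.getElem?_eq_some_iff.1 ha).1
    have hpost : post N (Move.sync k t) = {Sum.inl k} ∪ Sum.inr '' N.post t := rfl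
    have hpre : pre N (Move.sync k t) = {Sum.inl (k-1)} ∪ Sum.inr '' N.pre t := rfl
    unfold delta
    rw [hpost, hpre]
    have h1 : ∀ j, ((Sum.inl j : ℕ ⊕ P) ∈ ({Sum.inl k} : Set (ℕ ⊕ P)) ∪ Sum.inr '' N.post t) ↔ j = k := by
      intro j; simp
    have h2 : ∀ j, ((Sum.inl j : ℕ ⊕ P) ∈ ({Sum.inl (k-1)} : Set (ℕ ⊕ P)) ∪ Sum.inr '' N.pre t) ↔ j = k - 1 := by
      intro j; simp
    simp only [h1, h2]
    rw [Finset.sum_sub_distrib,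
      Finset.sum_ite_eq' (Finset.range (σ.length + 1)) k fun _ => (1:ℤ),
      Finset.sum_ite_eq' (Finset.range (σ.length + 1)) (k-1) fun _ => (1:ℤ)]
    simp only [Finset.mem_range]
    rw [if_pos (by omega), if_pos (by omega)]
    ring

/-- Invariant: exactly one token among the trace-net places, none beyond `p'_n`. -/
def Inv (σ : List A) (M : Marking P) : Prop :=
  (∑ j ∈ Finset.range (σ.length + 1), M (Sum.inl j)) = 1
    ∧ ∀ j, σ.length < j → M (Sum.inl j) = 0

lemma inv_init (σ : List A) (N : WFNet P T A) : Inv σ (init σ N : Marking P) := by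
  classical
  constructor
  · have : ∀ j, (init σ N (Sum.inl j) : ℕ) = if j = 0 then 1 else 0 := by
      intro j; unfold init; simp
    calc ∑ j ∈ Finset.range (σ.length + 1), init σ N (Sum.inl j)
        = ∑ j ∈ Finset.range (σ.length + 1), if j = 0 then 1 else 0 :=
          Finset.sum_congr rfl fun j _ => this j
      _ = 1 := by
          rw [Finset.sum_ite_eq' (Finset.range (σ.length + 1)) 0 fun _ => 1]
          simp
  · intro j hj
    unfold init
    simp only [Sum.inl.injEq, reduceCtorEq, or_false]
    rw [if_neg (by omega)]

lemma inv_fire {σ : List A} {N : WFNet P T A} {m : Move T} {M : Marking P}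
    (hm : m ∈ transitions σ N) (hen : ∀ q ∈ pre N m, 0 < M q) (hM : Inv σ M) :
    Inv σ (fire N m M) := by
  obtain ⟨h1, h2⟩ := hM
  constructor
  · have : (∑ j ∈ Finset.range (σ.length + 1), (fire N m M (Sum.inl j) : ℤ))
        = ∑ j ∈ Finset.range (σ.length + 1), ((M (Sum.inl j) : ℤ) + delta N (Sum.inl j) m) :=
      Finset.sum_congr rfl fun j _ => fire_cast hen _
    rw [Finset.sum_add_distrib, delta_sum_zero hm, add_zero,
      ← Nat.cast_sum, ← Nat.cast_sum, h1] at this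
    exact_mod_cast this
  · intro j hj
    have hpre : Sum.inl j ∉ pre N m := fun h => absurd (inl_pre_lt hm h) (by omega)
    have hpost : Sum.inl j ∉ post N m := fun h => absurd (inl_post_le hm h) (by omega)
    unfold fire
    rw [if_neg (by tauto), if_neg (by tauto)]
    exact h2 j hj

lemma inv_firesTo {σ : List A} {N : WFNet P T A} {M M' : Marking P}
    {ts : List (Move T)} (h : FiresTo N (transitions σ N) M ts M') (hM : Inv σ M) :
    Inv σ M' := by
  induction ts generalizing M with
  | nil => rwa [← h]
  | cons m ms ih =>
    rcases h with ⟨⟨hmem, hen⟩, h2⟩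
    exact ih h2 (inv_fire hmem hen hM)

end SPN

/-- **Feasibility of firing-count vectors for the heuristic ILP.**
If `M` is reachable in the SPN and `ts` is a firing sequence from `M` to a goal
marking `M'` (a marking with a token in the last trace-net place `p'_n`), then the
firing-count (Parikh) vector of `ts` is a feasible solution of the integer linear
program defining the prefix-alignment heuristic `h(M)`. -/
theorem parikh_vector_feasible_for_heuristic_ilp
    {P T A : Type} [DecidableEq T] (N : WFNet P T A) (σ : List A)
    (c : Move T → ℝ≥0)
    (M : Marking P) (hM : SPN.Reachable N (SPN.transitions σ N) (SPN.init σ N) M)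
    (ts : List (Move T)) (M' : Marking P)
    (hfire : SPN.FiresTo N (SPN.transitions σ N) M ts M')
    (hgoal : 1 ≤ M' (Sum.inl σ.length)) :
    SPN.Feasible σ N M (fun m => ts.count m) := by
  obtain ⟨ts0, hts0⟩ := hM
  have hInvM : SPN.Inv σ M := SPN.inv_firesTo hts0 (SPN.inv_init σ N)
  have hInvM' : SPN.Inv σ M' := SPN.inv_firesTo hfire hInvM
  have hmem := SPN.firesTo_mem hfire
  have hstate := SPN.firesTo_state hfire
  have hdiff := SPN.finsum_diff_eq ts hmem
  have key : ∀ q : ℕ ⊕ P,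
      (M q : ℤ)
        + ∑ᶠ m ∈ {m | m ∈ SPN.transitions σ N ∧ q ∈ SPN.post N m}, ((ts.count m : ℕ) : ℤ)
        - ∑ᶠ m ∈ {m | m ∈ SPN.transitions σ N ∧ q ∈ SPN.pre N m}, ((ts.count m : ℕ) : ℤ)
      = (M' q : ℤ) := by
    intro q
    rw [add_sub_assoc, hdiff q, ← hstate q]
  obtain ⟨hsum, hhigh⟩ := hInvM'
  have hmemn : σ.length ∈ Finset.range (σ.length + 1) := by simp
  rw [← Finset.add_sum_erase _ _ hmemn] at hsum
  have hn1 : M' (Sum.inl σ.length) = 1 := by omega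
  have hrest : ∑ j ∈ (Finset.range (σ.length + 1)).erase σ.length, M' (Sum.inl j) = 0 := by
    omega
  have hn0 : ∀ j < σ.length, M' (Sum.inl j) = 0 := by
    intro j hj
    exact Finset.sum_eq_zero_iff.1 hrest j (by simp [Finset.mem_erase]; omega)
  constructor
  · intro j hj
    rw [key (Sum.inl j)]
    unfold SPN.final
    by_cases hje : j = σ.length
    · subst hje
      simp [hn1]
    · simp [hje, hn0 j (lt_of_le_of_ne hj hje)]
  · intro p
    rw [key (Sum.inr p)]
    exact Int.natCast_nonneg _
end
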